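/- arXiv:1308.5628 — 4 statements merged into one kernel-verified Lean document; each statement's English description precedes it below -/
import Mathlib

section
/- Let k be an algebraically closed field of characteristic 0. There exists an elementary abelian 2-subgroup of rank exactly 6 (i.e., a subgroup isomorphic to (ℤ/2ℤ)^6) inside the Cremona group Cr_3(k), realized as the group of k-algebra automorphisms of the rational function field k(x_1,x_2,x_3); hence the bound r(G) ≤ 6 for elementary abelian 2-subgroups of Cr_3(k) is sharp. -/
/-!
The substitutions `xᵢ ↦ ±xᵢ^{±1}` are automorphisms of the Laurent polynomial ring
`k[x₁^{±1}, …, xₙ^{±1}]`, the coordinate ring of the torus `𝔾ₘⁿ ⊆ 𝔸ⁿ`. They compose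
coordinatewise, because inverting `±xᵢ` does not change its sign, so they form a group
`(ℤˣ × ℤˣ)ⁿ ≅ (ℤ/2)^{2n}`. It acts faithfully once `-1 ≠ 1` in `k`: evaluating at `(1, …, 1)`
recovers the signs, and `xᵢ⁻¹ ≠ xᵢ`. Both rings have fraction field `k(x₁, …, xₙ)`, so this group
embeds in `Crₙ(k)`. For `n = 3` it has rank 6.
-/

/-- The space Cremona group `Cr₃(k)`, realized as the group of `k`-algebra
automorphisms of the rational function field `k(x₁,x₂,x₃)`. -/
abbrev Cremona3 (k : Type*) [Field k] : Type _ :=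
  FractionRing (MvPolynomial (Fin 3) k) ≃ₐ[k] FractionRing (MvPolynomial (Fin 3) k)

open MvPolynomial

noncomputable section

theorem Int.units_zpow_units (s e : ℤˣ) : s ^ (e : ℤ) = s := by
  rcases Int.units_eq_one_or e with rfl | rfl
  · exact zpow_one s
  · simp [Int.units_inv_eq_self]

theorem Units.map_intCastRingHom_injective (R : Type*) [Ring R] [NeZero (2 : R)] :
    Function.Injective (Units.map (Int.castRingHom R).toMonoidHom) := by
  refine (injective_iff_map_eq_one _).mpr fun s hs => ?_
  rcases Int.units_eq_one_or s with rfl | rfl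
  · rfl
  · have h : (-1 : R) = 1 := by simpa using congrArg Units.val hs
    exact absurd (one_add_one_eq_two (R := R) ▸ neg_eq_iff_add_eq_zero.mp h) two_ne_zero

theorem Units.map_map_intCastRingHom {R S F : Type*} [Ring R] [Ring S] [FunLike F R S]
    [RingHomClass F R S] (f : F) (s : ℤˣ) :
    Units.map (f : R →* S) (Units.map (Int.castRingHom R).toMonoidHom s) =
      Units.map (Int.castRingHom S).toMonoidHom s :=
  Units.ext (by simp)

abbrev MvLaurentPolynomial (σ k : Type*) [Fintype σ] [CommRing k] : Type _ :=
  Localization.Away (∏ i, X i : MvPolynomial σ k)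

namespace MvLaurentPolynomial

section CommRing

variable {σ k : Type*} [Fintype σ] [CommRing k]

theorem isUnit_algebraMap_X (i : σ) :
    IsUnit (algebraMap (MvPolynomial σ k) (MvLaurentPolynomial σ k) (X i)) :=
  isUnit_of_dvd_unit (map_dvd _ (Finset.dvd_prod_of_mem _ (Finset.mem_univ i)))
    (IsLocalization.Away.algebraMap_isUnit _)

variable (k) in
def unitX (i : σ) : (MvLaurentPolynomial σ k)ˣ := (isUnit_algebraMap_X i).unit

theorem coe_unitX (i : σ) :
    (unitX k i : MvLaurentPolynomial σ k) = algebraMap (MvPolynomial σ k) _ (X i) :=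
  rfl

section Lift

variable {B : Type*} [CommRing B] [Algebra k B]

variable (k) in
def lift (u : σ → Bˣ) : MvLaurentPolynomial σ k →ₐ[k] B :=
  IsLocalization.liftAlgHom (M := Submonoid.powers (∏ i, X i))
    (f := aeval fun i => (u i : B)) <| by
      rintro ⟨_, n, rfl⟩
      simpa [Finset.prod_pow, map_prod] using ((∏ i, u i) ^ n).isUnit

theorem lift_unitX (u : σ → Bˣ) (i : σ) :
    lift k u (unitX k i : MvLaurentPolynomial σ k) = u i := by
  simp [lift, IsLocalization.liftAlgHom_apply, coe_unitX]

theorem map_lift_unitX (u : σ → Bˣ) (i : σ) :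
    Units.map (lift k u : MvLaurentPolynomial σ k →* B) (unitX k i) = u i :=
  Units.ext (lift_unitX u i)

theorem algHom_ext {f g : MvLaurentPolynomial σ k →ₐ[k] B}
    (h : ∀ i, f (unitX k i).val = g (unitX k i).val) : f = g :=
  IsLocalization.algHom_ext (Submonoid.powers (∏ i, X i)) (MvPolynomial.algHom_ext h)

end Lift

section SignInversion

variable (k)

def signInvUnit (ε : (σ → ℤˣ) × (σ → ℤˣ)) (i : σ) : (MvLaurentPolynomial σ k)ˣ :=
  Units.map (Int.castRingHom (MvLaurentPolynomial σ k)).toMonoidHom (ε.1 i) *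
    unitX k i ^ (ε.2 i : ℤ)

def signInv (ε : (σ → ℤˣ) × (σ → ℤˣ)) :
    MvLaurentPolynomial σ k →ₐ[k] MvLaurentPolynomial σ k :=
  lift k (signInvUnit k ε)

theorem signInv_signInvUnit (ε η : (σ → ℤˣ) × (σ → ℤˣ)) (i : σ) :
    Units.map (signInv k ε : MvLaurentPolynomial σ k →* _) (signInvUnit k η i) =
      signInvUnit k (ε * η) i := by
  rw [signInvUnit, map_mul, map_zpow, Units.map_map_intCastRingHom, signInv, map_lift_unitX,
    signInvUnit, signInvUnit, mul_zpow, ← map_zpow, Int.units_zpow_units, ← zpow_mul,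
    Prod.fst_mul, Prod.snd_mul, Pi.mul_apply, Pi.mul_apply, map_mul, Units.val_mul,
    mul_left_comm, mul_assoc]

theorem signInv_mul (ε η : (σ → ℤˣ) × (σ → ℤˣ)) :
    signInv k (ε * η) = (signInv k ε).comp (signInv k η) := by
  refine algHom_ext fun i => ?_
  rw [AlgHom.comp_apply, signInv, signInv, signInv, lift_unitX, lift_unitX]
  exact (congrArg Units.val (signInv_signInvUnit k ε η i)).symm

theorem signInv_one : signInv k (1 : (σ → ℤˣ) × (σ → ℤˣ)) = AlgHom.id k _ := by
  refine algHom_ext fun i => ?_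
  rw [signInv, lift_unitX]
  simp [signInvUnit]

def signInvAut :
    (σ → ℤˣ) × (σ → ℤˣ) →* (MvLaurentPolynomial σ k ≃ₐ[k] MvLaurentPolynomial σ k) :=
  (AlgEquiv.algHomUnitsEquiv k _).toMonoidHom.comp <| MonoidHom.toHomUnits
    { toFun := signInv k, map_one' := signInv_one k, map_mul' := signInv_mul k }

end SignInversion

section Faithful

variable [IsDomain k]

theorem powers_prod_X_le_nonZeroDivisors :
    Submonoid.powers (∏ i, X i : MvPolynomial σ k) ≤ nonZeroDivisors _ :=
  powers_le_nonZeroDivisors_of_noZeroDivisors (Finset.prod_ne_zero_iff.mpr fun i _ => X_ne_zero i)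

theorem algebraMap_injective :
    Function.Injective (algebraMap (MvPolynomial σ k) (MvLaurentPolynomial σ k)) :=
  IsLocalization.injective _ powers_prod_X_le_nonZeroDivisors

theorem unitX_inv_ne (i : σ) : (unitX k i)⁻¹ ≠ unitX k i := by
  intro h
  have hsq : (X i * X i : MvPolynomial σ k) = 1 := by
    refine algebraMap_injective ?_
    have := congrArg Units.val (inv_eq_iff_mul_eq_one.mp h)
    rwa [Units.val_mul, coe_unitX, Units.val_one, ← map_mul,
      ← map_one (algebraMap (MvPolynomial σ k) (MvLaurentPolynomial σ k))] at this
  simpa using congrArg constantCoeff hsq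

variable [NeZero (2 : k)]

theorem eq_one_of_signInvUnit_eq_unitX {ε : (σ → ℤˣ) × (σ → ℤˣ)} {i : σ}
    (h : signInvUnit k ε i = unitX k i) : ε.1 i = 1 ∧ ε.2 i = 1 := by
  have hsign : ε.1 i = 1 := by
    apply Units.map_intCastRingHom_injective k
    have := congrArg (Units.map (lift k (fun _ : σ => (1 : kˣ)) : MvLaurentPolynomial σ k →* k)) h
    rw [signInvUnit, map_mul, map_zpow, Units.map_map_intCastRingHom, map_lift_unitX, one_zpow,
      mul_one] at this
    rwa [map_one]
  refine ⟨hsign, ?_⟩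
  rw [signInvUnit, hsign, map_one, one_mul] at h
  rcases Int.units_eq_one_or (ε.2 i) with he | he
  · exact he
  · rw [he, Units.val_neg, Units.val_one, zpow_neg_one] at h
    exact absurd h (unitX_inv_ne i)

theorem signInvAut_injective :
    Function.Injective (signInvAut k : (σ → ℤˣ) × (σ → ℤˣ) →* _) := by
  refine (injective_iff_map_eq_one _).mpr fun ε hε => ?_
  have hX (i : σ) : signInvUnit k ε i = unitX k i :=
    Units.ext ((lift_unitX _ i).symm.trans (DFunLike.congr_fun hε _))
  exact Prod.ext (funext fun i => (eq_one_of_signInvUnit_eq_unitX (hX i)).1)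
    (funext fun i => (eq_one_of_signInvUnit_eq_unitX (hX i)).2)

end Faithful

end CommRing

section FractionField

variable {σ : Type*} [Fintype σ] (k : Type*) [Field k]

instance : Algebra (MvLaurentPolynomial σ k) (FractionRing (MvPolynomial σ k)) :=
  IsLocalization.localizationAlgebraOfSubmonoidLe _ _ _ _
    (powers_prod_X_le_nonZeroDivisors (σ := σ) (k := k))

instance : IsScalarTower (MvPolynomial σ k) (MvLaurentPolynomial σ k)
    (FractionRing (MvPolynomial σ k)) :=
  IsLocalization.localization_isScalarTower_of_submonoid_le _ _ _ _
    (powers_prod_X_le_nonZeroDivisors (σ := σ) (k := k))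

instance : IsScalarTower k (MvLaurentPolynomial σ k) (FractionRing (MvPolynomial σ k)) :=
  IsScalarTower.of_algebraMap_eq' <| by
    rw [IsScalarTower.algebraMap_eq k (MvPolynomial σ k) (MvLaurentPolynomial σ k),
      ← RingHom.comp_assoc, ← IsScalarTower.algebraMap_eq, ← IsScalarTower.algebraMap_eq]

instance : IsFractionRing (MvLaurentPolynomial σ k) (FractionRing (MvPolynomial σ k)) :=
  IsFractionRing.isFractionRing_of_isDomain_of_isLocalization
    (Submonoid.powers (∏ i, X i : MvPolynomial σ k)) _ _

def signInvCremona : (σ → ℤˣ) × (σ → ℤˣ) →*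
    (FractionRing (MvPolynomial σ k) ≃ₐ[k] FractionRing (MvPolynomial σ k)) :=
  (IsFractionRing.fieldEquivOfAlgEquivHom k (FractionRing (MvPolynomial σ k))).comp (signInvAut k)

theorem signInvCremona_injective [NeZero (2 : k)] :
    Function.Injective (signInvCremona (σ := σ) k) :=
  (IsFractionRing.fieldEquivOfAlgEquivHom_injective k (MvLaurentPolynomial σ k) k _).comp
    signInvAut_injective

end FractionField

end MvLaurentPolynomial

def MulEquiv.sumArrowEquivProdArrow (α β M : Type*) [Mul M] :
    (α ⊕ β → M) ≃* (α → M) × (β → M) :=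
  { Equiv.sumArrowEquivProdArrow α β M with map_mul' := fun _ _ => rfl }

def Int.unitsMulEquivMultiplicativeZModTwo : ℤˣ ≃* Multiplicative (ZMod 2) :=
  mulEquivOfPrimeCardEq (p := 2) (by simp) (by simp)

end

theorem exists_elementary_abelian_two_subgroup_of_rank_six_Cremona3_general
    (k : Type*) [Field k] [CharZero k] :
    ∃ G : Subgroup (Cremona3 k),
      Nonempty (G ≃* (Fin 6 → Multiplicative (ZMod 2))) := by
  let e : ((Fin 3 → ℤˣ) × (Fin 3 → ℤˣ)) ≃* (Fin 6 → Multiplicative (ZMod 2)) :=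
    (MulEquiv.sumArrowEquivProdArrow _ _ _).symm.trans
      (MulEquiv.arrowCongr finSumFinEquiv Int.unitsMulEquivMultiplicativeZModTwo)
  exact ⟨(MvLaurentPolynomial.signInvCremona k).range,
    ⟨(MonoidHom.ofInjective (MvLaurentPolynomial.signInvCremona_injective k)).symm.trans e⟩⟩

/-- There exists an elementary abelian 2-subgroup of rank exactly `6`, i.e. a subgroup
isomorphic to `(ℤ/2ℤ)^6`, inside `Cr₃(k)` for `k` algebraically closed of characteristic 0:
the bound `r(G) ≤ 6` is sharp. -/
theorem exists_elementary_abelian_two_subgroup_of_rank_six_Cremona3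
    (k : Type*) [Field k] [IsAlgClosed k] [CharZero k] :
    ∃ G : Subgroup (Cremona3 k),
      Nonempty (G ≃* (Fin 6 → Multiplicative (ZMod 2))) :=
  exists_elementary_abelian_two_subgroup_of_rank_six_Cremona3_general k
end

section
/- Let k be an algebraically closed field of characteristic 0 and let n be an even positive integer. Every elementary abelian 2-subgroup G of the projective general linear group PGL_{n+1}(k) = GL_{n+1}(k)/Z(GL_{n+1}(k)) is conjugate in PGL_{n+1}(k) to a subgroup of the image of the diagonal matrices; in particular r(G) ≤ n, i.e. |G| ≤ 2^n. -/
open Matrix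

/-- The projective general linear group `PGL_m(k) = GL_m(k)/Z(GL_m(k))`. -/
abbrev PGL (m : ℕ) (k : Type*) [Field k] : Type _ :=
  GL (Fin m) k ⧸ Subgroup.center (GL (Fin m) k)

/-!
Lift every element of `G` to an involution of determinant `1` in `GL_{n+1}(k)`: a lift `B` has
`B ^ 2` scalar, so it can be rescaled to an involution, and in odd dimension `-1` flips the sign
of the determinant. Two such lifts commute, because their commutator is a scalar `z` with
`z ^ 2 = 1` and `z ^ (n + 1) = 1`. A commuting family of involutions is simultaneously
diagonalizable, which gives the conjugating element. The conjugated lifts are diagonal with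
entries `±1` and product `1`, so they are determined by their first `n` entries: `|G| ≤ 2 ^ n`.
-/

namespace Module.End

variable {K V : Type*} [Field K] [AddCommGroup V] [Module K V]

theorem isSemisimple_of_pow_eq_one {f : End K V} {m : ℕ} (hm : (m : K) ≠ 0) (hf : f ^ m = 1) :
    f.IsSemisimple :=
  isSemisimple_of_squarefree_aeval_eq_zero
    (Polynomial.separable_X_pow_sub_C 1 hm one_ne_zero).squarefree (by simp [hf])

theorem exists_basis_forall_apply_eq_smul_of_commute_of_isSemisimple [IsAlgClosed K]
    [FiniteDimensional K V] {ι : Type*} (f : ι → End K V) (hcomm : ∀ i j, Commute (f i) (f j))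
    (hss : ∀ i, (f i).IsSemisimple) :
    ∃ b : Basis (Fin (Module.finrank K V)) K V, ∀ i j, ∃ μ : K, f i (b j) = μ • b j := by
  classical
  set W : (ι → K) → Submodule K V := fun χ ↦ ⨅ i, (f i).maxGenEigenspace (χ i)
  have hW : DirectSum.IsInternal W :=
    DirectSum.isInternal_submodule_of_iSupIndep_of_iSup_eq_top
      (independent_iInf_maxGenEigenspace_of_forall_mapsTo f
        fun i j μ ↦ mapsTo_maxGenEigenspace_of_comm (hcomm j i) μ)
      (iSup_iInf_maxGenEigenspace_eq_top_of_iSup_maxGenEigenspace_eq_top_of_commute f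
        (fun i j _ ↦ hcomm i j) fun i ↦ iSup_maxGenEigenspace_eq_top (f i))
  let b := hW.collectedBasis fun χ ↦ Module.Free.chooseBasis K (W χ)
  have : Fintype _ := FiniteDimensional.fintypeBasisIndex b
  let e := Fintype.equivFinOfCardEq (Module.finrank_eq_card_basis b).symm
  refine ⟨b.reindex e, fun i j ↦ ⟨(e.symm j).1 i, ?_⟩⟩
  rw [Basis.reindex_apply, ← mem_eigenspace_iff,
    ← (hss i).isFinitelySemisimple.maxGenEigenspace_eq_eigenspace]
  exact iInf_le (fun i ↦ (f i).maxGenEigenspace _) i (hW.collectedBasis_mem _ _)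

end Module.End

theorem LinearMap.isDiag_toMatrix_of_forall_apply_eq_smul {R M κ : Type*} [CommRing R]
    [AddCommGroup M] [Module R M] [Fintype κ] [DecidableEq κ] (b : Module.Basis κ R M)
    (f : Module.End R M) (hf : ∀ j, ∃ μ : R, f (b j) = μ • b j) :
    (LinearMap.toMatrix b b f).IsDiag := by
  intro i j hij
  obtain ⟨μ, hμ⟩ := hf j
  simp [LinearMap.toMatrix_apply, hμ, Finsupp.single_eq_of_ne hij]

theorem Matrix.exists_GL_isDiag_conj_of_commute_of_isSemisimple {K n ι : Type*} [Field K]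
    [IsAlgClosed K] [Fintype n] [DecidableEq n] (A : ι → Matrix n n K)
    (hcomm : ∀ i j, Commute (A i) (A j))
    (hss : ∀ i, Module.End.IsSemisimple (Matrix.toLinAlgEquiv' (A i))) :
    ∃ P : GL n K, ∀ i, ((P : Matrix n n K) * A i * (↑P⁻¹ : Matrix n n K)).IsDiag := by
  obtain ⟨b, hb⟩ := Module.End.exists_basis_forall_apply_eq_smul_of_commute_of_isSemisimple
    (fun i ↦ Matrix.toLinAlgEquiv' (A i)) (fun i j ↦ (hcomm i j).map _) hss
  let b' := b.reindex ((finCongr (Module.finrank_fintype_fun_eq_card K)).trans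
    (Fintype.equivFin n).symm)
  let e := Pi.basisFun K n
  refine ⟨⟨b'.toMatrix e, e.toMatrix b', b'.toMatrix_mul_toMatrix_flip e,
    e.toMatrix_mul_toMatrix_flip b'⟩, fun i ↦ ?_⟩
  have hA : LinearMap.toMatrix e e (Matrix.toLinAlgEquiv' (A i)) = A i := by
    rw [LinearMap.toMatrix_eq_toMatrix']
    exact LinearMap.toMatrixAlgEquiv'_toLinAlgEquiv' (A i)
  convert LinearMap.isDiag_toMatrix_of_forall_apply_eq_smul b' _ fun j ↦ by
    simpa only [b', Module.Basis.reindex_apply] using hb i _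
  rw [← basis_toMatrix_mul_linearMap_toMatrix_mul_basis_toMatrix b' e b' e, hA]
  rfl

namespace Matrix.GeneralLinearGroup

variable {n : Type*} [Fintype n] [DecidableEq n]

theorem exists_mem_center_sq_eq {K : Type*} [Field K] [IsAlgClosed K] {u : GL n K}
    (hu : u ∈ Subgroup.center (GL n K)) : ∃ s ∈ Subgroup.center (GL n K), s ^ 2 = u := by
  rw [center_eq_range_scalar] at hu ⊢
  obtain ⟨a, rfl⟩ := hu
  obtain ⟨μ, hμ⟩ := IsAlgClosed.exists_eq_mul_self (a : K)
  have hμ0 : μ ≠ 0 := by rintro rfl; simp at hμ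
  refine ⟨scalar n (Units.mk0 μ hμ0), ⟨_, rfl⟩, ?_⟩
  rw [← map_pow]
  congr 1
  ext
  simp [hμ, sq]

variable {R : Type*} [CommRing R]

theorem pow_card_eq_one_of_mem_center {z : GL n R} (hz : z ∈ Subgroup.center (GL n R))
    (hdet : det z = 1) : z ^ Fintype.card n = 1 := by
  rw [center_eq_range_scalar] at hz
  obtain ⟨c, rfl⟩ := hz
  rw [det_scalar] at hdet
  rw [← map_pow, hdet, map_one]

theorem commute_of_commute_mk (hn : Odd (Fintype.card n)) {A B : GL n R} (hB : B ^ 2 = 1)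
    (h : Commute (A : GL n R ⧸ Subgroup.center (GL n R)) B) : Commute A B := by
  obtain ⟨z, hz_def⟩ : ∃ z, z = A * B * A⁻¹ * B⁻¹ := ⟨_, rfl⟩
  have hz : z ∈ Subgroup.center (GL n R) := by
    rw [← QuotientGroup.eq_one_iff, hz_def, QuotientGroup.mk_mul, QuotientGroup.mk_mul,
      QuotientGroup.mk_mul, QuotientGroup.mk_inv, QuotientGroup.mk_inv, h.eq]
    group
  have hz_sq : z ^ 2 = 1 := by
    have hzB : z * B = A * B * A⁻¹ := by rw [hz_def]; group
    have hzB_sq := congrArg (· ^ 2) hzB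
    have hzB_comm : Commute z B := (Subgroup.mem_center_iff.mp hz B).symm
    simpa only [hzB_comm.mul_pow, conj_pow, hB, mul_one, mul_inv_cancel] using hzB_sq
  have hz_card : z ^ Fintype.card n = 1 :=
    pow_card_eq_one_of_mem_center hz (by simp [hz_def])
  have hz_one := pow_gcd_eq_one.mpr ⟨hz_sq, hz_card⟩
  rw [hn.coprime_two_left.gcd_eq_one, pow_one, hz_def, mul_inv_eq_one, mul_inv_eq_iff_eq_mul]
    at hz_one
  exact hz_one

theorem exists_lift_sq_eq_one_det_eq_one {K : Type*} [Field K] [IsAlgClosed K]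
    (hn : Odd (Fintype.card n)) {g : GL n K ⧸ Subgroup.center (GL n K)} (hg : g ^ 2 = 1) :
    ∃ A : GL n K, (A : GL n K ⧸ Subgroup.center (GL n K)) = g ∧ A ^ 2 = 1 ∧
      (A : Matrix n n K).det = 1 := by
  obtain ⟨B, rfl⟩ := QuotientGroup.mk_surjective g
  obtain ⟨s, hs, hsB⟩ := exists_mem_center_sq_eq (u := B ^ 2)
    (by rwa [← QuotientGroup.eq_one_iff, QuotientGroup.mk_pow])
  have hsq : (B * s⁻¹) ^ 2 = 1 := by
    rw [Commute.mul_pow (Subgroup.mem_center_iff.mp (inv_mem hs) B), inv_pow, hsB,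
      mul_inv_cancel]
  have hmk : ((B * s⁻¹ : GL n K) : GL n K ⧸ Subgroup.center (GL n K)) = B := by
    rw [QuotientGroup.mk_mul, (QuotientGroup.eq_one_iff _).mpr (inv_mem hs), mul_one]
  have hdet : ((B * s⁻¹ : GL n K) : Matrix n n K).det ^ 2 = 1 := by
    rw [← det_pow, ← Units.val_pow_eq_pow_val, hsq, Units.val_one, det_one]
  rcases sq_eq_one_iff.mp hdet with hdet | hdet
  · exact ⟨B * s⁻¹, hmk, hsq, hdet⟩
  · refine ⟨-(B * s⁻¹), ?_, by rwa [neg_sq], ?_⟩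
    · have hneg : (-1 : GL n K) ∈ Subgroup.center (GL n K) :=
        Subgroup.mem_center_iff.mpr fun g ↦ by rw [mul_neg_one, neg_one_mul]
      rw [← mul_neg_one, QuotientGroup.mk_mul, (QuotientGroup.eq_one_iff _).mpr hneg, mul_one,
        hmk]
    · rw [Units.val_neg, det_neg, hdet, hn.neg_one_pow, neg_one_mul, neg_neg]

theorem exists_commuting_lifts {K : Type*} [Field K] [IsAlgClosed K] (hn : Odd (Fintype.card n))
    (G : Subgroup (GL n K ⧸ Subgroup.center (GL n K))) (hG_sq : ∀ g : G, g ^ 2 = 1)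
    (hG_comm : ∀ g g' : G, Commute g g') :
    ∃ L : G → GL n K, (∀ g, (L g : GL n K ⧸ Subgroup.center (GL n K)) = g) ∧
      (∀ g, L g ^ 2 = 1) ∧ (∀ g, (L g : Matrix n n K).det = 1) ∧
      ∀ g g', Commute (L g) (L g') := by
  choose L hL_mk hL_sq hL_det using fun g : G ↦
    exists_lift_sq_eq_one_det_eq_one hn (congrArg Subtype.val (hG_sq g))
  refine ⟨L, hL_mk, hL_sq, hL_det, fun g g' ↦ commute_of_commute_mk hn (hL_sq g') ?_⟩
  rw [hL_mk, hL_mk]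
  exact congrArg Subtype.val (hG_comm g g')

end Matrix.GeneralLinearGroup

theorem Matrix.injOn_decide_diag_castSucc_eq_one {R : Type*} [CommRing R] [NoZeroDivisors R]
    [DecidableEq R] (n : ℕ) :
    Set.InjOn (fun (M : Matrix (Fin (n + 1)) (Fin (n + 1)) R) (i : Fin n) ↦
        decide (M i.castSucc i.castSucc = 1))
      {M | M.IsDiag ∧ M ^ 2 = 1 ∧ M.det = 1} := by
  have diag_sign : ∀ M : Matrix (Fin (n + 1)) (Fin (n + 1)) R, M.IsDiag → M ^ 2 = 1 →
      ∀ i, M i i = 1 ∨ M i i = -1 := fun M hM hM2 i ↦ by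
    rw [← hM.diagonal_diag, sq, diagonal_mul_diagonal, ← diagonal_one, diagonal_eq_diagonal_iff]
      at hM2
    exact mul_self_eq_one_iff.mp (hM2 i)
  have diag_prod : ∀ M : Matrix (Fin (n + 1)) (Fin (n + 1)) R, M.IsDiag → M.det = 1 →
      (∏ i : Fin n, M i.castSucc i.castSucc) * M (Fin.last n) (Fin.last n) = 1 :=
    fun M hM hdet ↦ by rwa [← hM.diagonal_diag, det_diagonal, Fin.prod_univ_castSucc] at hdet
  rintro M ⟨hM, hM2, hMdet⟩ N ⟨hN, hN2, hNdet⟩ hMN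
  have hcastSucc : ∀ i : Fin n, M i.castSucc i.castSucc = N i.castSucc i.castSucc := fun i ↦ by
    have := decide_eq_decide.mp (congrFun hMN i)
    rcases diag_sign M hM hM2 i.castSucc with h | h <;>
    rcases diag_sign N hN hN2 i.castSucc with h' | h' <;> simp_all
  have hlast : M (Fin.last n) (Fin.last n) = N (Fin.last n) (Fin.last n) := by
    have hM1 := diag_prod M hM hMdet
    have hN1 := diag_prod N hN hNdet
    simp only [hcastSucc] at hM1
    linear_combination N (Fin.last n) (Fin.last n) * hM1 - M (Fin.last n) (Fin.last n) * hN1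
  ext i j
  by_cases hij : i = j
  · subst hij
    induction i using Fin.lastCases with
    | last => exact hlast
    | cast i => exact hcastSucc i
  · rw [hM hij, hN hij]

theorem Matrix.GeneralLinearGroup.card_le_two_pow_of_injective_isDiag {R ι : Type*} [CommRing R]
    [NoZeroDivisors R] (n : ℕ) (D : ι → GL (Fin (n + 1)) R) (hD : Function.Injective D)
    (hD_diag : ∀ i, (D i : Matrix (Fin (n + 1)) (Fin (n + 1)) R).IsDiag)
    (hD_sq : ∀ i, D i ^ 2 = 1)
    (hD_det : ∀ i, (D i : Matrix (Fin (n + 1)) (Fin (n + 1)) R).det = 1) :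
    Nat.card ι ≤ 2 ^ n := by
  classical
  have hD_mem (i : ι) : (D i : Matrix (Fin (n + 1)) (Fin (n + 1)) R) ∈
      {M | M.IsDiag ∧ M ^ 2 = 1 ∧ M.det = 1} :=
    ⟨hD_diag i, by rw [← Units.val_pow_eq_pow_val, hD_sq, Units.val_one], hD_det i⟩
  calc Nat.card ι ≤ Nat.card (Fin n → Bool) :=
        Nat.card_le_card_of_injective _ fun i j hij ↦
          hD (Units.ext (injOn_decide_diag_castSucc_eq_one n (hD_mem i) (hD_mem j) hij))
    _ = 2 ^ n := by simp

theorem MulEquiv.sq_eq_one_of_pi_zmod_two {H ι : Type*} [Monoid H]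
    (e : H ≃* (ι → Multiplicative (ZMod 2))) (x : H) : x ^ 2 = 1 :=
  e.injective <| by
    funext i
    rw [map_pow, map_one, Pi.pow_apply, Pi.one_apply]
    generalize e x i = a
    revert a
    decide

open Matrix.GeneralLinearGroup in
theorem elementary_abelian_two_subgroup_PGL_conjugate_to_diagonal_general
    (k : Type*) [Field k] [IsAlgClosed k] [CharZero k]
    (n : ℕ) (hn2 : Even n)
    (G : Subgroup (PGL (n + 1) k)) (r : ℕ)
    (h : Nonempty (G ≃* (Fin r → Multiplicative (ZMod 2)))) :
    (∃ c : PGL (n + 1) k, ∀ g ∈ G, ∃ D : GL (Fin (n + 1)) k,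
        Matrix.IsDiag (D : Matrix (Fin (n + 1)) (Fin (n + 1)) k) ∧
        c * g * c⁻¹ = QuotientGroup.mk' (Subgroup.center (GL (Fin (n + 1)) k)) D) ∧
      r ≤ n := by
  obtain ⟨ψ⟩ := h
  have hodd : Odd (Fintype.card (Fin (n + 1))) := by simpa using hn2.add_one
  obtain ⟨L, hL_mk, hL_sq, hL_det, hL_comm⟩ := exists_commuting_lifts hodd G
    ψ.sq_eq_one_of_pi_zmod_two fun g g' ↦ ψ.injective (by rw [map_mul, map_mul, mul_comm])
  obtain ⟨P, hP⟩ := exists_GL_isDiag_conj_of_commute_of_isSemisimple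
    (fun g ↦ (L g : Matrix (Fin (n + 1)) (Fin (n + 1)) k))
    (fun g g' ↦ (hL_comm g g').map (Units.coeHom _))
    (fun g ↦ Module.End.isSemisimple_of_pow_eq_one (m := 2) two_ne_zero (by
      rw [← map_pow, ← Units.val_pow_eq_pow_val, hL_sq, Units.val_one, map_one]))
  set D : G → GL (Fin (n + 1)) k := fun g ↦ MulAut.conj P (L g)
  have hD_diag (g : G) : (D g : Matrix (Fin (n + 1)) (Fin (n + 1)) k).IsDiag := by
    simpa [D] using hP g
  refine ⟨⟨P, fun g hg ↦ ⟨D ⟨g, hg⟩, hD_diag _, by simp [D, hL_mk]⟩⟩, ?_⟩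
  have hL_inj : Function.Injective L := fun g g' hgg' ↦
    Subtype.ext (by rw [← hL_mk, hgg', hL_mk])
  have hcard : 2 ^ r ≤ 2 ^ n := calc
    2 ^ r = Nat.card G := by simp [Nat.card_congr ψ.toEquiv]
    _ ≤ 2 ^ n := card_le_two_pow_of_injective_isDiag n D ((MulAut.conj P).injective.comp hL_inj)
      hD_diag (fun g ↦ by simp [D, conj_pow, hL_sq])
      (fun g ↦ by simp [D, hL_det, ← val_det_apply])
  exact (Nat.pow_le_pow_iff_right one_lt_two).mp hcard

/-- For `n` even and positive and `k` algebraically closed of characteristic 0, every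
elementary abelian 2-subgroup `G ≅ (ℤ/2ℤ)^r` of `PGL_{n+1}(k)` is conjugate to a subgroup
of the image of the diagonal matrices; in particular `r ≤ n`. -/
theorem elementary_abelian_two_subgroup_PGL_conjugate_to_diagonal
    (k : Type*) [Field k] [IsAlgClosed k] [CharZero k]
    (n : ℕ) (hn : 0 < n) (hn2 : Even n)
    (G : Subgroup (PGL (n + 1) k)) (r : ℕ)
    (h : Nonempty (G ≃* (Fin r → Multiplicative (ZMod 2)))) :
    (∃ c : PGL (n + 1) k, ∀ g ∈ G, ∃ D : GL (Fin (n + 1)) k,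
        Matrix.IsDiag (D : Matrix (Fin (n + 1)) (Fin (n + 1)) k) ∧
        c * g * c⁻¹ = QuotientGroup.mk' (Subgroup.center (GL (Fin (n + 1)) k)) D) ∧
      r ≤ n :=
  elementary_abelian_two_subgroup_PGL_conjugate_to_diagonal_general k n hn2 G r h
end

section
/- Let k be an algebraically closed field of characteristic 0 and let m be an odd positive integer. For every finite 2-subgroup G of PGL_m(k) = GL_m(k)/Z(GL_m(k)), there exists a subgroup G' of the special linear group SL_m(k) such that the canonical homomorphism SL_m(k) → PGL_m(k) restricts to an isomorphism from G' onto G. -/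
/-!
The preimage of `G` in `SL_m(k)` is an extension of the 2-group `G` by the kernel of the map
`SL_m(k) → PGL_m(k)`, which is onto because `k` is algebraically closed. That kernel is the
centre of `SL_m(k)`, isomorphic to the cyclic group `μ_m(k)`, whose order divides the odd number
`m`. The two orders are coprime, so by Schur–Zassenhaus the kernel has a complement in the
preimage, and that complement maps isomorphically onto `G`.
-/

open Matrix

/-- The canonical homomorphism `SL_m(k) → PGL_m(k)`. -/
noncomputable def SLtoPGL (m : ℕ) (k : Type*) [Field k] :
    Matrix.SpecialLinearGroup (Fin m) k →* PGL m k :=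
  (QuotientGroup.mk' (Subgroup.center (GL (Fin m) k))).comp Matrix.SpecialLinearGroup.toGL

namespace Subgroup.IsComplement'

variable {G Q : Type*} [Group G] [Group Q] {f : G →* Q} {C : Subgroup G}

theorem injOn (h : IsComplement' f.ker C) : Set.InjOn f C := by
  intro x hx y hy hxy
  have hker : x * y⁻¹ ∈ f.ker := by rw [f.mem_ker, map_mul, map_inv, hxy, mul_inv_cancel]
  exact mul_inv_eq_one.mp (disjoint_def.mp h.disjoint hker (C.mul_mem hx (C.inv_mem hy)))

theorem map_eq_range (h : IsComplement' f.ker C) : C.map f = f.range := by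
  refine le_antisymm (map_le_range f C) ?_
  rintro _ ⟨g, rfl⟩
  obtain ⟨⟨n, c⟩, rfl⟩ := h.2 g
  exact ⟨c, c.2, by simp [f.mem_ker.mp n.2]⟩

end Subgroup.IsComplement'

namespace MonoidHom

variable {G Q : Type*} [Group G] [Group Q]

theorem exists_map_eq_range_injOn_of_coprime (f : G →* Q)
    (h : (Nat.card f.ker).Coprime (Nat.card f.range)) :
    ∃ C : Subgroup G, C.map f = f.range ∧ Set.InjOn f C := by
  rw [← Subgroup.index_ker] at h
  obtain ⟨C, hC⟩ := Subgroup.exists_right_complement'_of_coprime h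
  exact ⟨C, hC.map_eq_range, hC.injOn⟩

theorem exists_map_eq_injOn_of_coprime (f : G →* Q) {H : Subgroup Q} (hH : H ≤ f.range)
    (h : (Nat.card f.ker).Coprime (Nat.card H)) :
    ∃ H' : Subgroup G, H'.map f = H ∧ Set.InjOn f H' := by
  set K := H.comap f
  have hrange : (f.domRestrict K).range = H := by
    rw [domRestrict_range, Subgroup.map_comap_eq, inf_eq_right.mpr hH]
  have hker : Nat.card (f.domRestrict K).ker = Nat.card f.ker := by
    rw [ker_domRestrict]
    exact Nat.card_congr (Subgroup.subgroupOfEquivOfLe (f.ker_le_comap H)).toEquiv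
  obtain ⟨C, hmap, hinj⟩ := (f.domRestrict K).exists_map_eq_range_injOn_of_coprime
    (by rwa [hker, hrange])
  refine ⟨C.map K.subtype, ?_, ?_⟩
  · rw [Subgroup.map_map, ← hrange, ← hmap]
    rfl
  · rintro _ ⟨x, hx, rfl⟩ _ ⟨y, hy, rfl⟩ hxy
    exact congrArg K.subtype (hinj hx hy hxy)

end MonoidHom

theorem card_rootsOfUnity_dvd (R : Type*) [CommRing R] [IsDomain R] (n : ℕ) [NeZero n] :
    Nat.card (rootsOfUnity n R) ∣ n := by
  rw [← IsCyclic.exponent_eq_card]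
  exact Monoid.exponent_dvd_of_forall_pow_eq_one fun ζ => OneMemClass.coe_eq_one.mp ζ.prop

section SLtoPGL

variable (k : Type*) [Field k] {m : ℕ}

theorem ker_SLtoPGL : (SLtoPGL m k).ker = Subgroup.center (SpecialLinearGroup (Fin m) k) :=
  SpecialLinearGroup.toPGL_ker

theorem card_ker_SLtoPGL_dvd (hm : 0 < m) : Nat.card (SLtoPGL m k).ker ∣ m := by
  rw [ker_SLtoPGL, Nat.card_congr (SpecialLinearGroup.center_equiv_rootsOfUnity' ⟨0, hm⟩).toEquiv,
    Fintype.card_fin]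
  have : NeZero m := ⟨hm.ne'⟩
  exact card_rootsOfUnity_dvd k m

theorem SLtoPGL_surjective [IsAlgClosed k] (hm : 0 < m) : Function.Surjective (SLtoPGL m k) := by
  refine (ProjectiveSpecialLinearGroup.toPGL_surj_of_roots fun r => ?_).comp
    QuotientGroup.mk_surjective
  obtain ⟨u, hu⟩ := IsAlgClosed.exists_pow_nat_eq (r : k) (by simpa using hm)
  have hu0 : u ≠ 0 := by
    rintro rfl
    exact r.ne_zero (by simpa [hm.ne'] using hu.symm)
  exact ⟨Units.mk0 u hu0, Units.ext (by simpa using hu)⟩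

end SLtoPGL

theorem finite_two_subgroup_PGL_lifts_to_SL_of_odd_general
    (k : Type*) [Field k] [IsAlgClosed k]
    (m : ℕ) (hm : 0 < m) (hodd : Odd m)
    (G : Subgroup (PGL m k)) (h2 : ∃ t : ℕ, Nat.card G = 2 ^ t) :
    ∃ G' : Subgroup (Matrix.SpecialLinearGroup (Fin m) k),
      Subgroup.map (SLtoPGL m k) G' = G ∧
      ∀ x ∈ G', ∀ y ∈ G', SLtoPGL m k x = SLtoPGL m k y → x = y := by
  obtain ⟨t, ht⟩ := h2
  have hcop : (Nat.card (SLtoPGL m k).ker).Coprime (Nat.card G) := by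
    rw [ht]
    exact hodd.coprime_two_right.pow_right t |>.coprime_dvd_left
      (card_ker_SLtoPGL_dvd k hm)
  obtain ⟨G', hmap, hinj⟩ := (SLtoPGL m k).exists_map_eq_injOn_of_coprime
    (by rw [MonoidHom.range_eq_top.mpr (SLtoPGL_surjective k hm)]; exact le_top) hcop
  exact ⟨G', hmap, fun x hx y hy => hinj hx hy⟩

/-- For `m` odd and positive and `k` algebraically closed of characteristic 0, every finite
2-subgroup `G` of `PGL_m(k)` lifts to `SL_m(k)`: there is a subgroup `G'` of `SL_m(k)`
mapping isomorphically (bijectively, via the canonical homomorphism) onto `G`. -/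
theorem finite_two_subgroup_PGL_lifts_to_SL_of_odd
    (k : Type*) [Field k] [IsAlgClosed k] [CharZero k]
    (m : ℕ) (hm : 0 < m) (hodd : Odd m)
    (G : Subgroup (PGL m k)) (h2 : ∃ t : ℕ, Nat.card G = 2 ^ t) :
    ∃ G' : Subgroup (Matrix.SpecialLinearGroup (Fin m) k),
      Subgroup.map (SLtoPGL m k) G' = G ∧
      ∀ x ∈ G', ∀ y ∈ G', SLtoPGL m k x = SLtoPGL m k y → x = y :=
  finite_two_subgroup_PGL_lifts_to_SL_of_odd_general k m hm hodd G h2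
end

section
/- Let k be an algebraically closed field of characteristic 0. Every elementary abelian 2-subgroup G of the quotient of the orthogonal group O_5(k) = { M ∈ GL_5(k) : Mᵀ M = I } by its center satisfies r(G) ≤ 4; equivalently, |G| ≤ 2^4 = 16. (This is the automorphism group of a smooth quadric hypersurface in projective 4-space.) -/
/-!
Let `H ≤ O₅(k)` be the preimage of `G`. The centre of `O₅(k)` is `{±1}`, and `-1` has
determinant `-1` in odd dimension, so a square that is central (of determinant `1`) is trivial:
every element of `H` is an involution, and `|H| = 2 |G|`. Commuting involutions of `k⁵` are
simultaneously diagonalisable with eigenvalues `±1`, so there are at most `2⁵` of them, whence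
`|G| ≤ 2⁴`.
-/

open Matrix

attribute [local instance] starRingOfComm

/-- The orthogonal group `O_5(k) = { M ∈ GL_5(k) : Mᵀ M = 1 }`
(`Matrix.orthogonalGroup` is the submonoid of matrices with `star A * A = 1`,
where `star` is transposition for a commutative ring). -/
abbrev O5 (k : Type*) [Field k] : Type _ := Matrix.orthogonalGroup (Fin 5) k

/-- The projective orthogonal group `PO_5(k) = O_5(k)/Z(O_5(k))`, the automorphism group
of a smooth quadric threefold in `ℙ⁴`. -/
abbrev PO5 (k : Type*) [Field k] : Type _ := O5 k ⧸ Subgroup.center (O5 k)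

open Module Set

namespace Module.End

section CommRing

variable {R M : Type*} [CommRing R] [AddCommGroup M] [Module R M]

theorem eq_smul_one_of_eigenspace_eq_top {f : End R M} {μ : R} (h : f.eigenspace μ = ⊤) :
    f = μ • 1 := by
  rwa [eigenspace_def, LinearMap.ker_eq_top, sub_eq_zero] at h

theorem encard_le_encard_restrict_mul_encard_restrict {S : Set (End R M)}
    {p q : Submodule R M} (hpq : Codisjoint p q) (hp : ∀ f ∈ S, MapsTo f p p)
    (hq : ∀ f ∈ S, MapsTo f q q) :
    S.encard ≤ (range fun f : S => f.1.restrict (hp f f.2)).encard *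
      (range fun f : S => f.1.restrict (hq f f.2)).encard := by
  let restrictPair (f : S) : (range fun f : S => f.1.restrict (hp f f.2)) ×
      (range fun f : S => f.1.restrict (hq f f.2)) := (⟨_, f, rfl⟩, ⟨_, f, rfl⟩)
  have hinj : Function.Injective restrictPair := by
    intro f g hfg
    simp only [restrictPair, Prod.mk.injEq, Subtype.ext_iff] at hfg
    refine Subtype.ext (LinearMap.ext_on_codisjoint hpq (fun x hx => ?_) (fun x hx => ?_))
    · exact congrArg Subtype.val (LinearMap.congr_fun hfg.1 ⟨x, hx⟩)
    · exact congrArg Subtype.val (LinearMap.congr_fun hfg.2 ⟨x, hx⟩)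
  exact (ENat.card_le_card_of_injective hinj).trans_eq (ENat.card_prod _ _)

end CommRing

variable {k V : Type*} [Field k] [AddCommGroup V] [Module k V]

theorem isCompl_eigenspace_one_eigenspace_neg_one [NeZero (2 : k)] {f : End k V}
    (hf : f * f = 1) : IsCompl (f.eigenspace 1) (f.eigenspace (-1)) := by
  have hff (x : V) : f (f x) = x := by rw [← mul_apply, hf, one_apply]
  refine ⟨disjoint_genEigenspace f (fun h => two_ne_zero (α := k) (by linear_combination h)) 1 1,
    Submodule.codisjoint_iff_exists_add_eq.mpr fun x =>
      ⟨(2⁻¹ : k) • (x + f x), (2⁻¹ : k) • (x - f x), ?_, ?_, ?_⟩⟩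
  · simp [hff, add_comm]
  · simp only [mem_eigenspace_iff, map_smul, map_sub, hff]
    module
  · rw [← smul_add, add_add_sub_cancel, ← two_smul k, smul_smul, inv_mul_cancel₀ two_ne_zero,
      one_smul]

theorem encard_le_two_pow_finrank_of_forall_eq_one_or_eq_neg_one [FiniteDimensional k V]
    {S : Set (End k V)} (hS : ∀ f ∈ S, f = 1 ∨ f = -1) : S.encard ≤ 2 ^ finrank k V := by
  rcases (finrank k V).eq_zero_or_pos with h0 | hpos
  · have : Subsingleton V := finrank_zero_iff.mp h0
    rw [h0, pow_zero]
    exact encard_le_card.trans ((ENat.card_le_one_iff_subsingleton _).mpr inferInstance)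
  · calc S.encard ≤ ({1, -1} : Set (End k V)).encard := encard_le_encard hS
      _ ≤ 1 + 1 := (encard_insert_le _ _).trans_eq (by rw [encard_singleton])
      _ ≤ 2 ^ finrank k V := by exact_mod_cast Nat.le_self_pow hpos.ne' 2

/-- Induction on the dimension: an element of `S` other than `±1` splits `V` into two proper
`S`-stable eigenspaces, and an element of `S` is determined by its restrictions to them. -/
theorem encard_le_two_pow_finrank_of_commute [NeZero (2 : k)] [FiniteDimensional k V]
    {S : Set (End k V)} (hS : ∀ f ∈ S, f * f = 1) (hcomm : ∀ f ∈ S, ∀ g ∈ S, Commute f g) :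
    S.encard ≤ 2 ^ finrank k V := by
  induction hn : finrank k V using Nat.strong_induction_on generalizing V with
  | _ n ih =>
  by_cases hpm : ∀ f ∈ S, f = 1 ∨ f = -1
  · exact hn ▸ encard_le_two_pow_finrank_of_forall_eq_one_or_eq_neg_one hpm
  push Not at hpm
  obtain ⟨a, ha, ha1, ham1⟩ := hpm
  have hpq := isCompl_eigenspace_one_eigenspace_neg_one (hS a ha)
  have hp (f) (hf : f ∈ S) : MapsTo f (a.eigenspace 1) (a.eigenspace 1) :=
    mapsTo_genEigenspace_of_comm (hcomm a ha f hf) 1 1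
  have hq (f) (hf : f ∈ S) : MapsTo f (a.eigenspace (-1)) (a.eigenspace (-1)) :=
    mapsTo_genEigenspace_of_comm (hcomm a ha f hf) (-1) 1
  have hdim := Submodule.finrank_add_eq_of_isCompl hpq
  have hp0 : finrank k (a.eigenspace 1) ≠ 0 := fun h => ham1 <|
    (eq_smul_one_of_eigenspace_eq_top (eq_top_of_isCompl_bot
      (Submodule.finrank_eq_zero.mp h ▸ hpq.symm))).trans (neg_one_smul k 1)
  have hq0 : finrank k (a.eigenspace (-1)) ≠ 0 := fun h => ha1 <|
    (eq_smul_one_of_eigenspace_eq_top (eq_top_of_isCompl_bot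
      (Submodule.finrank_eq_zero.mp h ▸ hpq))).trans (one_smul k 1)
  have encard_restrict_le {W : Submodule k V} (hW : ∀ f ∈ S, MapsTo f W W)
      (hlt : finrank k W < n) :
      (range fun f : S => f.1.restrict (hW f f.2)).encard ≤ 2 ^ finrank k W := by
    refine ih _ hlt ?_ ?_ rfl
    · rintro _ ⟨f, rfl⟩
      exact LinearMap.ext fun x => Subtype.ext (LinearMap.congr_fun (hS f f.2) x)
    · rintro _ ⟨f, rfl⟩ _ ⟨g, rfl⟩
      exact LinearMap.restrict_commute (hcomm f f.2 g g.2) _ _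
  calc S.encard ≤ _ := encard_le_encard_restrict_mul_encard_restrict hpq.codisjoint hp hq
    _ ≤ 2 ^ finrank k (a.eigenspace 1) * 2 ^ finrank k (a.eigenspace (-1)) :=
      mul_le_mul' (encard_restrict_le hp (by omega)) (encard_restrict_le hq (by omega))
    _ = 2 ^ n := by rw [← pow_add, hdim, hn]

end Module.End

theorem mul_comm_of_forall_mul_self_eq_one {H : Type*} [Group H] (hH : ∀ a : H, a * a = 1)
    (a b : H) : a * b = b * a := by
  have hinv (c : H) : c⁻¹ = c := inv_eq_of_mul_eq_one_right (hH c)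
  calc a * b = (a * b)⁻¹ := (hinv _).symm
    _ = b * a := by rw [_root_.mul_inv_rev, hinv, hinv]

theorem ENat.card_le_two_pow_finrank_of_injective {k V H : Type*} [Field k] [NeZero (2 : k)]
    [AddCommGroup V] [Module k V] [FiniteDimensional k V] [Group H] (hH : ∀ a : H, a * a = 1)
    {ρ : H →* End k V} (hρ : Function.Injective ρ) : ENat.card H ≤ 2 ^ finrank k V := by
  refine hρ.encard_range.trans (End.encard_le_two_pow_finrank_of_commute ?_ ?_)
  · rintro _ ⟨a, rfl⟩
    rw [← map_mul, hH, map_one]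
  · rintro _ ⟨a, rfl⟩ _ ⟨b, rfl⟩
    rw [Commute, SemiconjBy, ← map_mul, ← map_mul, mul_comm_of_forall_mul_self_eq_one hH]

namespace Matrix.orthogonalGroup

variable {n k : Type*} [Fintype n] [DecidableEq n] [Field k]

theorem diagonal_mem_of_mul_self_eq_one {R : Type*} [CommRing R] {d : n → R}
    (hd : ∀ i, d i * d i = 1) : diagonal d ∈ orthogonalGroup n R := by
  rw [mem_orthogonalGroup_iff', diagonal_transpose, diagonal_mul_diagonal, ← diagonal_one]
  exact congrArg diagonal (funext hd)

theorem permMatrix_mem {R : Type*} [CommRing R] (σ : Equiv.Perm n) :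
    σ.permMatrix R ∈ orthogonalGroup n R := by
  rw [mem_orthogonalGroup_iff]
  simp [← Matrix.permMatrix_mul]

section center

variable {z : orthogonalGroup n k} (hz : z ∈ Subgroup.center (orthogonalGroup n k))
include hz

theorem apply_eq_zero_of_mem_center [NeZero (2 : k)] {i j : n} (hij : i ≠ j) :
    (z : Matrix n n k) i j = 0 := by
  let d : n → k := fun l => if l = i then -1 else 1
  have hcomm := congrArg (fun g : orthogonalGroup n k => (g : Matrix n n k) i j)
    (Subgroup.mem_center_iff.mp hz ⟨diagonal d, diagonal_mem_of_mul_self_eq_one fun l => by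
      by_cases h : l = i <;> simp [d, h]⟩)
  simp only [d, Submonoid.coe_mul, diagonal_mul, mul_diagonal, hij.symm, if_true, if_false,
    neg_mul, one_mul, mul_one] at hcomm
  exact (mul_eq_zero.mp (by linear_combination -hcomm : (2 : k) * _ = 0)).resolve_left
    two_ne_zero

theorem apply_self_eq_of_mem_center (i j : n) :
    (z : Matrix n n k) i i = (z : Matrix n n k) j j := by
  have hcomm := congrArg (fun g : orthogonalGroup n k => (g : Matrix n n k) i j)
    (Subgroup.mem_center_iff.mp hz ⟨_, permMatrix_mem (Equiv.swap i j)⟩)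
  simpa [Equiv.Perm.permMatrix, PEquiv.toMatrix_toPEquiv_mul, PEquiv.mul_toMatrix_toPEquiv]
    using hcomm.symm

theorem eq_one_or_eq_neg_one_of_mem_center [NeZero (2 : k)] : z = 1 ∨ z = -1 := by
  rcases isEmpty_or_nonempty n with hn | ⟨⟨i⟩⟩
  · exact .inl (Subtype.ext (Subsingleton.elim _ _))
  have hscalar : (z : Matrix n n k) = scalar n ((z : Matrix n n k) i i) := by
    ext a b
    rcases eq_or_ne a b with rfl | hab
    · simp [apply_self_eq_of_mem_center hz a i]
    · simp [apply_eq_zero_of_mem_center hz hab, hab]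
  have hsq : (z : Matrix n n k) i i * (z : Matrix n n k) i i = 1 := by
    have := congrFun (congrFun ((mem_orthogonalGroup_iff' n k).mp z.2) i) i
    rw [hscalar] at this
    simpa using this
  rcases mul_self_eq_one_iff.mp hsq with h | h
  · exact .inl (Subtype.ext (by rw [hscalar, h]; simp))
  · exact .inr (Subtype.ext (by rw [hscalar, h, Unitary.coe_neg]; simp [← diagonal_neg]))

end center

theorem neg_one_mem_center : (-1 : orthogonalGroup n k) ∈ Subgroup.center (orthogonalGroup n k) :=
  Subgroup.mem_center_iff.mpr fun g => by rw [mul_neg_one, neg_one_mul]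

theorem one_ne_neg_one [Nonempty n] [NeZero (2 : k)] : (1 : orthogonalGroup n k) ≠ -1 := by
  intro h
  obtain ⟨i⟩ := ‹Nonempty n›
  have := congrFun (congrFun (congrArg Subtype.val h) i) i
  simp only [Unitary.coe_neg, OneMemClass.coe_one, neg_apply, one_apply_eq] at this
  exact two_ne_zero (α := k) (by linear_combination this)

theorem card_center [Nonempty n] [NeZero (2 : k)] :
    Nat.card (Subgroup.center (orthogonalGroup n k)) = 2 := by
  refine Nat.card_eq_two_iff.mpr ⟨1, ⟨-1, neg_one_mem_center⟩,
    fun h => one_ne_neg_one (congrArg Subtype.val h), ?_⟩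
  ext ⟨z, hz⟩
  simp only [mem_insert_iff, mem_singleton_iff, mem_univ, iff_true]
  rcases eq_one_or_eq_neg_one_of_mem_center hz with rfl | rfl
  · exact .inl rfl
  · exact .inr rfl

theorem mul_self_eq_one_of_mul_self_mem_center [NeZero (2 : k)] (hn : Odd (Fintype.card n))
    {a : orthogonalGroup n k} (ha : a * a ∈ Subgroup.center (orthogonalGroup n k)) :
    a * a = 1 := by
  refine (eq_one_or_eq_neg_one_of_mem_center ha).resolve_right fun h => ?_
  have hdet : (a : Matrix n n k).det * (a : Matrix n n k).det = 1 := by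
    simpa using congrArg det ((mem_orthogonalGroup_iff' n k).mp a.2)
  have := congrArg (fun g : orthogonalGroup n k => (g : Matrix n n k).det) h
  simp only [Unitary.coe_neg, UnitaryGroup.mul_val, UnitaryGroup.one_val, det_mul, hdet, det_neg,
    det_one, hn.neg_one_pow, mul_one] at this
  exact two_ne_zero (α := k) (by linear_combination this)

theorem two_mul_card_le_of_forall_mul_self_eq_one [NeZero (2 : k)] (hn : Odd (Fintype.card n))
    (K : Subgroup (orthogonalGroup n k ⧸ Subgroup.center (orthogonalGroup n k)))
    (hK : ∀ g ∈ K, g * g = 1) : 2 * Nat.card K ≤ 2 ^ Fintype.card n := by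
  have : Nonempty n := Fintype.card_pos_iff.mp hn.pos
  let H := K.comap (QuotientGroup.mk' (Subgroup.center (orthogonalGroup n k)))
  have hcard : Nat.card H = 2 * Nat.card K := by
    rw [← card_center (n := n) (k := k)]
    exact QuotientGroup.card_preimage_mk _ _
  have hH (a : H) : a * a = 1 := Subtype.ext <| mul_self_eq_one_of_mul_self_mem_center hn <|
    (QuotientGroup.eq_one_iff _).mp (by simpa using hK _ a.2)
  let ρ : H →* Module.End k (n → k) := (toLinAlgEquiv' : Matrix n n k ≃ₐ[k] _).toMonoidHom.comp
    ((orthogonalGroup n k).subtype.comp H.subtype)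
  have hρ : Function.Injective ρ :=
    toLinAlgEquiv'.injective.comp (Subtype.val_injective.comp Subtype.val_injective)
  have hle := ENat.card_le_two_pow_finrank_of_injective hH hρ
  rw [finrank_fintype_fun_eq_card] at hle
  have : Finite H := ENat.card_lt_top.mp (hle.trans_lt (ENat.natCast_lt_top _))
  rw [← hcard]
  exact_mod_cast (ENat.card_eq_coe_natCard H) ▸ hle

end Matrix.orthogonalGroup

theorem rank_le_four_of_elementary_abelian_two_subgroup_PO5_general
    (k : Type*) [Field k] [CharZero k]
    (G : Subgroup (PO5 k)) (r : ℕ)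
    (h : Nonempty (G ≃* (Fin r → Multiplicative (ZMod 2)))) :
    r ≤ 4 ∧ Nat.card G ≤ 16 := by
  obtain ⟨e⟩ := h
  have hcard : Nat.card G = 2 ^ r := by simp [Nat.card_congr e.toEquiv]
  have hG (g) (hg : g ∈ G) : g * g = 1 := by
    have hsq (x : Multiplicative (ZMod 2)) : x * x = 1 := by revert x; decide
    have : (⟨g, hg⟩ * ⟨g, hg⟩ : G) = 1 := e.injective <| by
      rw [map_mul, map_one]
      exact funext fun i => hsq _
    exact congrArg Subtype.val this
  have hbound := orthogonalGroup.two_mul_card_le_of_forall_mul_self_eq_one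
    (by decide : Odd (Fintype.card (Fin 5))) G hG
  rw [hcard, ← pow_succ'] at hbound
  have hr : r + 1 ≤ 5 := (Nat.pow_le_pow_iff_right (by norm_num)).mp hbound
  refine ⟨by omega, ?_⟩
  rw [hcard]
  exact Nat.pow_le_pow_right two_pos (by omega : r ≤ 4)

/-- Every elementary abelian 2-subgroup `G ≅ (ℤ/2ℤ)^r` of `O_5(k)/Z(O_5(k))`
(`k` algebraically closed of characteristic 0) satisfies `r ≤ 4`, equivalently
`|G| ≤ 2^4 = 16`. -/
theorem rank_le_four_of_elementary_abelian_two_subgroup_PO5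
    (k : Type*) [Field k] [IsAlgClosed k] [CharZero k]
    (G : Subgroup (PO5 k)) (r : ℕ)
    (h : Nonempty (G ≃* (Fin r → Multiplicative (ZMod 2)))) :
    r ≤ 4 ∧ Nat.card G ≤ 16 :=
  rank_le_four_of_elementary_abelian_two_subgroup_PO5_general k G r h
end
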